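/- arXiv:cs/0508069 — 2 statements merged into one kernel-verified Lean document; each statement's English description precedes it below -/
import Mathlib

section
/- Let f, g : ℝ → ℝ be monotone increasing and lower semicontinuous with f ≠ g. Then the sets {(a,c) ∈ ℚ × ℚ | (c:ℝ) < f a} and {(a,c) ∈ ℚ × ℚ | (c:ℝ) < g a} are distinct. -/
open Filter Topology Set

/- A monotone lower semicontinuous function is determined by its values on a dense set: if
`g x < f x`, lower semicontinuity keeps `f` above `g x` on some `Ioc l x`, and at a point `q` of the
dense set there, `f q ≤ g q ≤ g x` by monotonicity of `g`. On the rationals, the values are in turn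
determined by the rational pairs below the graph. -/

theorem LowerSemicontinuous.le_of_monotone_of_dense {α β : Type*} [TopologicalSpace α]
    [LinearOrder α] [OrderTopology α] [DenselyOrdered α] [NoMinOrder α] [LinearOrder β]
    {f g : α → β} {s : Set α} (hf : LowerSemicontinuous f) (hg : Monotone g) (hs : Dense s)
    (hfg : ∀ x ∈ s, f x ≤ g x) : f ≤ g := fun x => not_lt.1 fun hlt => by
  obtain ⟨l, hlx, hl⟩ := exists_Ioc_subset_of_mem_nhds (hf x (g x) hlt) (exists_lt x)
  obtain ⟨q, hqs, hq⟩ := hs.exists_between hlx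
  exact (hl (Ioo_subset_Ioc_self hq)).not_ge ((hfg q hqs).trans (hg hq.2.le))

theorem stmt_4 (f g : ℝ → ℝ)
    (hfm : Monotone f) (hgm : Monotone g)
    (hfl : LowerSemicontinuous f) (hgl : LowerSemicontinuous g)
    (hne : f ≠ g) :
    {p : ℚ × ℚ | ((p.2 : ℝ)) < f ((p.1 : ℝ))} ≠ {p : ℚ × ℚ | ((p.2 : ℝ)) < g ((p.1 : ℝ))} := by
  intro hset
  have hrat : ∀ a : ℚ, f a = g a := fun a =>
    eq_of_forall_rat_lt_iff_lt fun c => Set.ext_iff.1 hset (a, c)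
  have hdense : Dense (range ((↑) : ℚ → ℝ)) := Rat.denseRange_cast
  refine hne (le_antisymm ?_ ?_)
  · exact hfl.le_of_monotone_of_dense hgm hdense (forall_mem_range.2 fun a => (hrat a).le)
  · exact hgl.le_of_monotone_of_dense hfm hdense (forall_mem_range.2 fun a => (hrat a).ge)
end

section
/- Every function f : ℝ → ℝ with the property that f(sup_n q_n) = sup_n f(q_n) for all bounded monotone increasing rational sequences (q_n) is monotone increasing on ℝ. -/
open Filter Topology Set

theorem stmt_16 (f : ℝ → ℝ)
    (hf : ∀ q : ℕ → ℚ, Monotone q → BddAbove (Set.range fun n => ((q n : ℝ))) →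
      f (⨆ n, ((q n : ℝ))) = ⨆ n, f ((q n : ℝ))) :
    ∀ x y : ℝ, x ≤ y → f x ≤ f y := by
  -- Step 1: f is monotone on rationals
  have hrat : ∀ a b : ℚ, a ≤ b → f a ≤ f b := by
    intro a b hab
    set q : ℕ → ℚ := fun n => if n = 0 then a else b with hq
    have hmono : Monotone q := by
      intro m n hmn
      by_cases hm : m = 0
      · by_cases hn : n = 0 <;> simp [hq, hm, hn, hab]
      · have hn : n ≠ 0 := by omega
        simp [hq, hm, hn]
    have hbdd : BddAbove (Set.range fun n => ((q n : ℝ))) := by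
      refine ⟨(b : ℝ), ?_⟩
      rintro z ⟨n, rfl⟩
      by_cases hn : n = 0 <;> simp [hq, hn]
      exact_mod_cast hab
    have hsup : (⨆ n, ((q n : ℝ))) = (b : ℝ) := by
      apply le_antisymm
      · apply ciSup_le
        intro n
        by_cases hn : n = 0 <;> simp [hq, hn]
        exact_mod_cast hab
      · have := le_ciSup hbdd 1
        simpa [hq] using this
    have hbdd2 : BddAbove (Set.range fun n => f ((q n : ℝ))) := by
      refine ⟨max (f a) (f b), ?_⟩
      rintro z ⟨n, rfl⟩
      by_cases hn : n = 0 <;> simp [hq, hn]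
    have key := hf q hmono hbdd
    rw [hsup] at key
    calc f a = f ((q 0 : ℝ)) := by simp [hq]
      _ ≤ ⨆ n, f ((q n : ℝ)) := le_ciSup hbdd2 0
      _ = f b := key.symm
  -- Step 2: every real is the sup of a monotone rational sequence
  have hseq : ∀ z : ℝ, ∃ q : ℕ → ℚ, Monotone q ∧ (∀ n, ((q n : ℝ)) ≤ z) ∧
      Tendsto (fun n => ((q n : ℝ))) atTop (𝓝 z) ∧ (⨆ n, ((q n : ℝ))) = z := by
    intro z
    obtain ⟨u, hu, hulz, hut⟩ := exists_seq_strictMono_tendsto z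
    have hpick : ∀ n, ∃ p : ℚ, u n < (p : ℝ) ∧ (p : ℝ) < u (n + 1) := fun n =>
      exists_rat_btwn (hu (Nat.lt_succ_self n))
    choose q hq1 hq2 using hpick
    have hle : ∀ n, ((q n : ℝ)) ≤ z := fun n => le_of_lt ((hq2 n).trans (hulz _))
    have hmono : Monotone q := by
      apply monotone_nat_of_le_succ
      intro n
      have : ((q n : ℝ)) < ((q (n + 1) : ℝ)) := (hq2 n).trans (hq1 (n + 1))
      exact_mod_cast this.le
    have htend : Tendsto (fun n => ((q n : ℝ))) atTop (𝓝 z) := by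
      have h1 : Tendsto (fun n => u (n + 1)) atTop (𝓝 z) :=
        hut.comp (tendsto_add_atTop_nat 1)
      exact tendsto_of_tendsto_of_tendsto_of_le_of_le hut h1
        (fun n => (hq1 n).le) (fun n => (hq2 n).le)
    have hbdd : BddAbove (Set.range fun n => ((q n : ℝ))) := by
      refine ⟨z, ?_⟩
      rintro w ⟨n, rfl⟩
      exact hle n
    have hsup : (⨆ n, ((q n : ℝ))) = z := by
      have hmono' : Monotone fun n => ((q n : ℝ)) := fun m n h =>
        Rat.cast_le.mpr (hmono h)
      exact tendsto_nhds_unique (tendsto_atTop_ciSup hmono' hbdd) htend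
    exact ⟨q, hmono, hle, htend, hsup⟩
  -- Step 3: rational q ≤ y implies f q ≤ f y
  have hstep : ∀ (p : ℚ) (y : ℝ), (p : ℝ) ≤ y → f p ≤ f y := by
    intro p y hpy
    obtain ⟨r, hrmono, hrle, hrt, _⟩ := hseq y
    set s : ℕ → ℚ := fun m => max p (r m) with hs
    have hsmono : Monotone s := fun m n h => max_le_max le_rfl (hrmono h)
    have hcast : ∀ m, ((s m : ℝ)) = max (p : ℝ) ((r m : ℝ)) := by
      intro m; simp [hs]
    have hsle : ∀ m, ((s m : ℝ)) ≤ y := by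
      intro m; rw [hcast]; exact max_le hpy (hrle m)
    have hbdd : BddAbove (Set.range fun m => ((s m : ℝ))) := by
      refine ⟨y, ?_⟩; rintro w ⟨m, rfl⟩; exact hsle m
    have hst : Tendsto (fun m => ((s m : ℝ))) atTop (𝓝 y) := by
      have : Tendsto (fun m => max (p : ℝ) ((r m : ℝ))) atTop (𝓝 (max (p : ℝ) y)) :=
        tendsto_const_nhds.max hrt
      rw [max_eq_right hpy] at this
      simpa [hcast] using this
    have hsup : (⨆ m, ((s m : ℝ))) = y := by
      have hmono' : Monotone fun m => ((s m : ℝ)) := fun m n h =>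
        Rat.cast_le.mpr (hsmono h)
      exact tendsto_nhds_unique (tendsto_atTop_ciSup hmono' hbdd) hst
    obtain ⟨p', hp'⟩ := exists_rat_gt y
    have hbdd2 : BddAbove (Set.range fun m => f ((s m : ℝ))) := by
      refine ⟨f p', ?_⟩
      rintro w ⟨m, rfl⟩
      apply hrat
      have : ((s m : ℝ)) ≤ (p' : ℝ) := (hsle m).trans hp'.le
      exact_mod_cast this
    have key := hf s hsmono hbdd
    rw [hsup] at key
    calc f p ≤ f ((s 0 : ℝ)) := hrat p (s 0) (le_max_left _ _)
      _ ≤ ⨆ m, f ((s m : ℝ)) := le_ciSup hbdd2 0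
      _ = f y := key.symm
  -- Step 4: conclude
  intro x y hxy
  obtain ⟨q, hqmono, hqle, _, hqsup⟩ := hseq x
  have hbdd : BddAbove (Set.range fun n => ((q n : ℝ))) := by
    refine ⟨x, ?_⟩; rintro w ⟨n, rfl⟩; exact hqle n
  have key := hf q hqmono hbdd
  rw [hqsup] at key
  rw [key]
  apply ciSup_le
  intro n
  exact hstep (q n) y ((hqle n).trans hxy)
end
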